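/- Let α ∈ (3/2,2) and let u ∈ H¹(0,1) be piecewise linear on a uniform mesh with u(0)=u(1)=0 (a finite element function). Set φ = −ₓI₁^{α−1}(P_V u′) where P_V ψ = ψ − Γ(α)(ₓI₁^{α−1}ψ)(0). Then the bilinear form a(u,φ) = −∫₀¹ u′(x) ᴿD₁^{α−1}φ(x) dx satisfies a(u,φ) = ‖u′‖²_{L²(0,1)}. -/

import Mathlib

/-!
Write `g = P_V u' = u' - c` with the constant `c = Γ(α) (ₓI₁^{α-1} u')(0)`. By the semigroup law
`ₓI₁^{2-α} ∘ ₓI₁^{α-1} = ₓI₁^1` (Fubini on the triangle `x < t < s ≤ 1` and the Beta integral),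
`ₓI₁^{2-α} φ = -∫ₓ¹ g`, so `ᴿD₁^{α-1} φ = -g` at every continuity point of `g`, that is, off the
mesh. Hence `a(u, φ) = ∫₀¹ u' (u' - c) = ‖u'‖² - c (u(1) - u(0)) = ‖u'‖²`.
-/

open MeasureTheory Set

/-- Right-sided Riemann-Liouville fractional integral of order `γ`. -/
noncomputable def rightFracInt (γ : ℝ) (f : ℝ → ℝ) (x : ℝ) : ℝ :=
  (1 / Real.Gamma γ) * ∫ t in x..(1:ℝ), (t - x) ^ (γ - 1) * f t

/-- Right-sided Riemann-Liouville derivative of order `β ∈ (0,1)`. -/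
noncomputable def rightRLDeriv (β : ℝ) (u : ℝ → ℝ) (x : ℝ) : ℝ :=
  - deriv (rightFracInt (1 - β) u) x

/-- The operator `P_V ψ = ψ - Γ(α)(ₓI₁^{α-1} ψ)(0)`. -/
noncomputable def PV (α : ℝ) (ψ : ℝ → ℝ) (x : ℝ) : ℝ :=
  ψ x - Real.Gamma α * rightFracInt (α - 1) ψ 0

theorem integral_rpow_mul_sub_rpow {p q a : ℝ} (hp : 0 < p) (hq : 0 < q) (ha : 0 < a) :
    ∫ τ in (0:ℝ)..a, τ ^ (p - 1) * (a - τ) ^ (q - 1)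
      = a ^ (p + q - 1) * (Real.Gamma p * Real.Gamma q / Real.Gamma (p + q)) := by
  have hΓ := Complex.Gamma_mul_Gamma_eq_betaIntegral (s := (p : ℂ)) (t := (q : ℂ))
    (by simpa using hp) (by simpa using hq)
  have hΓpq : Complex.Gamma (p + q : ℝ) ≠ 0 := by
    rw [Complex.Gamma_ofReal]
    exact_mod_cast (Real.Gamma_pos_of_pos (add_pos hp hq)).ne'
  rw [← Complex.ofReal_inj, ← intervalIntegral.integral_ofReal]
  push_cast
  rw [← Complex.Gamma_ofReal, ← Complex.Gamma_ofReal, ← Complex.Gamma_ofReal]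
  push_cast
  rw [hΓ, mul_div_cancel_left₀ _ (by simpa using hΓpq), Complex.ofReal_cpow ha.le]
  push_cast
  rw [← Complex.betaIntegral_scaled _ _ ha]
  refine intervalIntegral.integral_congr fun τ hτ => ?_
  rw [uIcc_of_le ha.le] at hτ
  simp only [Complex.ofReal_cpow hτ.1, Complex.ofReal_cpow (sub_nonneg.2 hτ.2)]
  push_cast
  rfl

theorem integral_sub_rpow_mul_sub_rpow {p q x b : ℝ} (hp : 0 < p) (hq : 0 < q) (hxb : x < b) :
    ∫ t in x..b, (t - x) ^ (p - 1) * (b - t) ^ (q - 1)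
      = (b - x) ^ (p + q - 1) * (Real.Gamma p * Real.Gamma q / Real.Gamma (p + q)) := by
  have hshift := intervalIntegral.integral_comp_sub_right
    (fun τ => τ ^ (p - 1) * ((b - x) - τ) ^ (q - 1)) x (a := x) (b := b)
  simp only [sub_sub_sub_cancel_right, sub_self] at hshift
  rw [hshift, integral_rpow_mul_sub_rpow hp hq (sub_pos.2 hxb)]

theorem integrableOn_sub_rpow_mul_sub_rpow {a b x s : ℝ} (ha : 0 < a) (hb : 0 < b) (hxs : x < s) :
    IntegrableOn (fun t => (t - x) ^ (a - 1) * (s - t) ^ (b - 1)) (Ioo x s) := by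
  -- a nonzero Bochner integral certifies integrability
  refine Integrable.of_integral_ne_zero ?_
  rw [← integral_Ioc_eq_integral_Ioo, ← intervalIntegral.integral_of_le hxs.le,
    integral_sub_rpow_mul_sub_rpow ha hb hxs]
  have hΓ : ∀ {r : ℝ}, 0 < r → 0 < Real.Gamma r := Real.Gamma_pos_of_pos
  exact (mul_pos (Real.rpow_pos_of_pos (sub_pos.2 hxs) _)
    (div_pos (mul_pos (hΓ ha) (hΓ hb)) (hΓ (add_pos ha hb)))).ne'

theorem Set.Iio_inter_Ioc_of_le {α : Type*} [LinearOrder α] {s x c : α} (h : s ≤ c) :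
    Iio s ∩ Ioc x c = Ioo x s := by
  ext t; simp only [mem_inter_iff, mem_Iio, mem_Ioc, mem_Ioo]; grind

section Semigroup

variable {a b x : ℝ} {g : ℝ → ℝ}

/-- The integrand of `rightFracInt a (rightFracInt b g) x` as a function of `(t, s)`,
supported on the triangle `t < s`. -/
noncomputable def rightFracIntKernel (a b x : ℝ) (g : ℝ → ℝ) : ℝ × ℝ → ℝ :=
  {p | p.1 < p.2}.indicator fun p => (p.1 - x) ^ (a - 1) * (p.2 - p.1) ^ (b - 1) * g p.2

theorem rightFracIntKernel_eq_indicator_Ioi (t : ℝ) :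
    (fun s => rightFracIntKernel a b x g (t, s))
      = (Ioi t).indicator fun s => (t - x) ^ (a - 1) * (s - t) ^ (b - 1) * g s := by
  ext s; simp [rightFracIntKernel, Set.indicator]

theorem rightFracIntKernel_eq_indicator_Iio (s : ℝ) :
    (fun t => rightFracIntKernel a b x g (t, s))
      = (Iio s).indicator fun t => (t - x) ^ (a - 1) * (s - t) ^ (b - 1) * g s := by
  ext t; simp [rightFracIntKernel, Set.indicator]

theorem integral_rightFracIntKernel_right {t : ℝ} (ht : t ∈ Ioc x 1) :
    ∫ s in Ioc x 1, rightFracIntKernel a b x g (t, s)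
      = (t - x) ^ (a - 1) * ∫ s in t..1, (s - t) ^ (b - 1) * g s := by
  rw [rightFracIntKernel_eq_indicator_Ioi, integral_indicator measurableSet_Ioi,
    Measure.restrict_restrict measurableSet_Ioi, inter_comm, Ioc_inter_Ioi,
    max_eq_right ht.1.le, intervalIntegral.integral_of_le ht.2, ← integral_const_mul]
  simp only [mul_assoc]

theorem integral_indicator_Iio_rpow_mul_rpow (ha : 0 < a) (hb : 0 < b) {s : ℝ}
    (hs : s ∈ Ioc x 1) (c : ℝ) :
    ∫ t in Ioc x 1, (Iio s).indicator (fun t => (t - x) ^ (a - 1) * (s - t) ^ (b - 1) * c) t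
      = (s - x) ^ (a + b - 1) * (Real.Gamma a * Real.Gamma b / Real.Gamma (a + b)) * c := by
  rw [integral_indicator measurableSet_Iio, Measure.restrict_restrict measurableSet_Iio,
    Iio_inter_Ioc_of_le hs.2, integral_mul_const, ← integral_Ioc_eq_integral_Ioo,
    ← intervalIntegral.integral_of_le hs.1.le, integral_sub_rpow_mul_sub_rpow ha hb hs.1]

theorem integrable_rightFracIntKernel (ha : 0 < a) (hb : 0 < b)
    (hg : AEStronglyMeasurable g (volume.restrict (Ioc x 1)))
    (hgw : IntegrableOn (fun s => (s - x) ^ (a + b - 1) * g s) (Ioc x 1)) :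
    Integrable (rightFracIntKernel a b x g)
      ((volume.restrict (Ioc x 1)).prod (volume.restrict (Ioc x 1))) := by
  have hmeas : AEStronglyMeasurable (rightFracIntKernel a b x g)
      ((volume.restrict (Ioc x 1)).prod (volume.restrict (Ioc x 1))) :=
    ((by fun_prop : Measurable fun p : ℝ × ℝ => (p.1 - x) ^ (a - 1) * (p.2 - p.1) ^ (b - 1)
      ).aestronglyMeasurable.mul hg.comp_snd).indicator
      (measurableSet_lt measurable_fst measurable_snd)
  refine (integrable_prod_iff' hmeas).2 ⟨?_, ?_⟩
  · filter_upwards [ae_restrict_mem measurableSet_Ioc] with s hs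
    rw [rightFracIntKernel_eq_indicator_Iio, integrable_indicator_iff measurableSet_Iio,
      IntegrableOn, Measure.restrict_restrict measurableSet_Iio, Iio_inter_Ioc_of_le hs.2]
    exact (integrableOn_sub_rpow_mul_sub_rpow ha hb hs.1).mul_const _
  · refine (hgw.norm.const_mul (Real.Gamma a * Real.Gamma b / Real.Gamma (a + b))).congr ?_
    filter_upwards [ae_restrict_mem measurableSet_Ioc] with s hs
    have hnorm : (fun t => ‖rightFracIntKernel a b x g (t, s)‖)
        =ᵐ[volume.restrict (Ioc x 1)] (Iio s).indicator
          fun t => (t - x) ^ (a - 1) * (s - t) ^ (b - 1) * ‖g s‖ := by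
      filter_upwards [ae_restrict_mem measurableSet_Ioc] with t ht
      rw [show rightFracIntKernel a b x g (t, s) = _ from
        congrFun (rightFracIntKernel_eq_indicator_Iio s) t, norm_indicator_eq_indicator_norm]
      by_cases hts : t < s
      · simp only [indicator_of_mem (show t ∈ Iio s from hts), norm_mul, Real.norm_eq_abs,
          abs_of_nonneg (Real.rpow_nonneg (sub_nonneg.2 ht.1.le) _),
          abs_of_nonneg (Real.rpow_nonneg (sub_nonneg.2 hts.le) _)]
      · simp only [indicator_of_notMem (show t ∉ Iio s from hts)]
    rw [integral_congr_ae hnorm, integral_indicator_Iio_rpow_mul_rpow ha hb hs, norm_mul,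
      Real.norm_eq_abs, abs_of_nonneg (Real.rpow_nonneg (sub_nonneg.2 hs.1.le) _)]
    ring

theorem rightFracInt_rightFracInt (ha : 0 < a) (hb : 0 < b) (hx : x ≤ 1)
    (hg : AEStronglyMeasurable g (volume.restrict (Ioc x 1)))
    (hgw : IntegrableOn (fun s => (s - x) ^ (a + b - 1) * g s) (Ioc x 1)) :
    rightFracInt a (rightFracInt b g) x = rightFracInt (a + b) g x := by
  have hΓa := (Real.Gamma_pos_of_pos ha).ne'
  have hΓb := (Real.Gamma_pos_of_pos hb).ne'
  have hΓab := (Real.Gamma_pos_of_pos (add_pos ha hb)).ne'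
  set K := rightFracIntKernel a b x g
  calc rightFracInt a (rightFracInt b g) x
      = 1 / Real.Gamma a * (1 / Real.Gamma b) * ∫ t in Ioc x 1, ∫ s in Ioc x 1, K (t, s) := by
        rw [rightFracInt, intervalIntegral.integral_of_le hx, mul_assoc]
        congr 1
        rw [← integral_const_mul]
        refine setIntegral_congr_fun measurableSet_Ioc fun t ht => ?_
        rw [rightFracInt, integral_rightFracIntKernel_right ht]
        ring
    _ = 1 / Real.Gamma a * (1 / Real.Gamma b) * ∫ s in Ioc x 1, ∫ t in Ioc x 1, K (t, s) := by
        rw [integral_integral_swap (f := fun t s => K (t, s))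
          (integrable_rightFracIntKernel ha hb hg hgw)]
    _ = rightFracInt (a + b) g x := by
        rw [rightFracInt, intervalIntegral.integral_of_le hx, ← integral_const_mul,
          ← integral_const_mul]
        refine setIntegral_congr_fun measurableSet_Ioc fun s hs => ?_
        simp only [K, rightFracIntKernel_eq_indicator_Iio,
          integral_indicator_Iio_rpow_mul_rpow ha hb hs]
        field_simp

end Semigroup

theorem rightFracInt_one (g : ℝ → ℝ) (x : ℝ) : rightFracInt 1 g x = ∫ t in x..1, g t := by
  simp [rightFracInt]

theorem rightFracInt_neg (γ : ℝ) (f : ℝ → ℝ) :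
    rightFracInt γ (fun y => -f y) = fun x => -rightFracInt γ f x := by
  ext x
  simp [rightFracInt, intervalIntegral.integral_neg]

theorem rightRLDeriv_neg (β : ℝ) (f : ℝ → ℝ) (x : ℝ) :
    rightRLDeriv β (fun y => -f y) x = -rightRLDeriv β f x := by
  simp only [rightRLDeriv, rightFracInt_neg, deriv.fun_neg]

theorem rightRLDeriv_rightFracInt {β a x : ℝ} {g : ℝ → ℝ} (hβ : β ∈ Ioo 0 1)
    (hx : x ∈ Ioo a 1) (hg : IntervalIntegrable g volume a 1) (hgx : ContinuousAt g x) :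
    rightRLDeriv β (rightFracInt β g) x = g x := by
  have ha1 : a ≤ 1 := (hx.1.trans hx.2).le
  have hgI : IntegrableOn g (Ioc a 1) := (intervalIntegrable_iff_integrableOn_Ioc_of_le ha1).1 hg
  have hloc : rightFracInt (1 - β) (rightFracInt β g) =ᶠ[nhds x] fun y => ∫ t in y..1, g t := by
    filter_upwards [Ioo_mem_nhds hx.1 hx.2] with y hy
    have hgy : IntegrableOn g (Ioc y 1) := hgI.mono_set (Ioc_subset_Ioc hy.1.le le_rfl)
    rw [rightFracInt_rightFracInt (sub_pos.2 hβ.2) hβ.1 hy.2.le hgy.aestronglyMeasurable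
      (by simpa using hgy), sub_add_cancel, rightFracInt_one]
  have hmeas : StronglyMeasurableAtFilter g (nhds x) :=
    ⟨Ioo a 1, Ioo_mem_nhds hx.1 hx.2, (hgI.mono_set Ioo_subset_Ioc_self).aestronglyMeasurable⟩
  have hgx1 : IntervalIntegrable g volume x 1 :=
    hg.mono_set (uIcc_subset_uIcc_right (by rw [uIcc_of_le ha1]; exact Ioo_subset_Icc_self hx))
  have hderiv := intervalIntegral.integral_hasDerivAt_left hgx1 hmeas hgx
  rw [rightRLDeriv, hloc.deriv_eq, hderiv.deriv, neg_neg]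

def PiecewiseAffineOnMesh (m : ℕ) (u : ℝ → ℝ) : Prop :=
  ∀ k : ℕ, k < m → ∃ a b : ℝ, ∀ x ∈ Icc ((k : ℝ) / m) (((k : ℝ) + 1) / m), u x = a * x + b

theorem exists_lt_mem_Ioo_div {m : ℕ} (hm : 0 < m) {x : ℝ} (hx : x ∈ Ioo 0 1)
    (hxm : x ∉ range fun k : ℕ => (k : ℝ) / m) :
    ∃ k : ℕ, k < m ∧ x ∈ Ioo ((k : ℝ) / m) (((k : ℝ) + 1) / m) := by
  have hm' : (0 : ℝ) < m := Nat.cast_pos.2 hm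
  refine ⟨⌊x * m⌋₊, ?_, ?_, ?_⟩
  · exact_mod_cast (Nat.floor_lt (mul_nonneg hx.1.le hm'.le)).2 (by nlinarith [hx.2])
  · refine lt_of_le_of_ne ?_ fun h => hxm ⟨_, h⟩
    rw [div_le_iff₀ hm']
    exact Nat.floor_le (by nlinarith [hx.1])
  · rw [lt_div_iff₀ hm']
    exact Nat.lt_floor_add_one _

namespace PiecewiseAffineOnMesh

variable {m : ℕ} {u : ℝ → ℝ}

theorem exists_eventuallyEq_affine (hu : PiecewiseAffineOnMesh m u) (hm : 0 < m) {x : ℝ}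
    (hx : x ∈ Ioo 0 1 \ range fun k : ℕ => (k : ℝ) / m) :
    ∃ a b : ℝ, u =ᶠ[nhds x] fun y => a * y + b := by
  obtain ⟨k, hk, hxk⟩ := exists_lt_mem_Ioo_div hm hx.1 hx.2
  obtain ⟨a, b, hab⟩ := hu k hk
  exact ⟨a, b, Filter.mem_of_superset (Ioo_mem_nhds hxk.1 hxk.2)
    fun y hy => hab y (Ioo_subset_Icc_self hy)⟩

theorem hasDerivAt (hu : PiecewiseAffineOnMesh m u) (hm : 0 < m) {x : ℝ}
    (hx : x ∈ Ioo 0 1 \ range fun k : ℕ => (k : ℝ) / m) :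
    HasDerivAt u (deriv u x) x := by
  obtain ⟨a, b, hab⟩ := hu.exists_eventuallyEq_affine hm hx
  exact (((hasDerivAt_id x).const_mul a).add_const b).differentiableAt.congr_of_eventuallyEq
    hab |>.hasDerivAt

theorem continuousAt_deriv (hu : PiecewiseAffineOnMesh m u) (hm : 0 < m) {x : ℝ}
    (hx : x ∈ Ioo 0 1 \ range fun k : ℕ => (k : ℝ) / m) :
    ContinuousAt (deriv u) x := by
  obtain ⟨a, b, hab⟩ := hu.exists_eventuallyEq_affine hm hx
  have hd : deriv u =ᶠ[nhds x] fun _ => a :=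
    hab.deriv.trans (Filter.Eventually.of_forall fun y => by simp)
  exact continuousAt_const.congr hd.symm

theorem intervalIntegrable_comp_deriv (hu : PiecewiseAffineOnMesh m u) (hm : 0 < m)
    (F : ℝ → ℝ) : IntervalIntegrable (fun x => F (deriv u x)) volume 0 1 := by
  have hm' : (m : ℝ) ≠ 0 := Nat.cast_ne_zero.2 hm.ne'
  have hcell : ∀ k < m, IntervalIntegrable (fun x => F (deriv u x)) volume
      ((k : ℕ) / m : ℝ) (((k + 1 : ℕ) : ℝ) / m) := by
    intro k hk
    obtain ⟨a, b, hab⟩ := hu k hk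
    have hle : (k : ℝ) / m ≤ ((k + 1 : ℕ) : ℝ) / m := by gcongr; simp
    refine (intervalIntegrable_const (c := F a)).congr_ae ?_
    rw [uIoc_of_le hle]
    filter_upwards [ae_restrict_mem measurableSet_Ioc,
      ae_restrict_of_ae ((countable_range fun k : ℕ => (k : ℝ) / m).ae_notMem volume)]
      with y hy hym
    have hyk : y ∈ Ioo ((k : ℝ) / m) (((k : ℝ) + 1) / m) :=
      ⟨hy.1, lt_of_le_of_ne (by exact_mod_cast hy.2)
        fun h => hym ⟨k + 1, by push_cast; exact h.symm⟩⟩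
    have hloc : u =ᶠ[nhds y] fun z => a * z + b :=
      Filter.mem_of_superset (Ioo_mem_nhds hyk.1 hyk.2) fun z hz => hab z (Ioo_subset_Icc_self hz)
    simp [hloc.deriv_eq]
  simpa [hm'] using IntervalIntegrable.trans_iterate hcell

theorem integral_deriv (hu : PiecewiseAffineOnMesh m u) (hm : 0 < m)
    (hcont : ContinuousOn u (Icc 0 1)) : ∫ x in (0 : ℝ)..1, deriv u x = u 1 - u 0 :=
  integral_eq_of_hasDerivAt_off_countable_of_le u (deriv u) zero_le_one (countable_range _) hcont
    (fun _ hx => hu.hasDerivAt hm hx) (hu.intervalIntegrable_comp_deriv hm id)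

end PiecewiseAffineOnMesh

/-- Discrete coercivity identity: for `α ∈ (3/2,2)` and a continuous piecewise
linear finite element function `u` on a uniform mesh with `u(0) = u(1) = 0`, the
test function `φ = -ₓI₁^{α-1}(P_V u')` satisfies
`a(u,φ) = -∫₀¹ u' · ᴿD₁^{α-1} φ dx = ‖u'‖²_{L²(0,1)}`. -/
theorem discrete_coercivity (α : ℝ) (hα : α ∈ Set.Ioo (3/2 : ℝ) 2)
    (m : ℕ) (hm : 0 < m) (u : ℝ → ℝ)
    (hcont : ContinuousOn u (Set.Icc 0 1))
    (hpl : ∀ k : ℕ, k < m → ∃ a b : ℝ,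
      ∀ x ∈ Set.Icc ((k : ℝ) / m) (((k : ℝ) + 1) / m), u x = a * x + b)
    (hu0 : u 0 = 0) (hu1 : u 1 = 0) :
    -∫ x in (0:ℝ)..1,
        deriv u x *
          rightRLDeriv (α - 1) (fun y => - rightFracInt (α - 1) (PV α (deriv u)) y) x
      = ∫ x in (0:ℝ)..1, (deriv u x) ^ 2 := by
  have hu : PiecewiseAffineOnMesh m u := hpl
  set c := Real.Gamma α * rightFracInt (α - 1) (deriv u) 0
  have hRL : ∀ x ∈ Ioo 0 1 \ range fun k : ℕ => (k : ℝ) / m,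
      rightRLDeriv (α - 1) (fun y => -rightFracInt (α - 1) (PV α (deriv u)) y) x
        = -(deriv u x - c) := by
    intro x hx
    rw [rightRLDeriv_neg, rightRLDeriv_rightFracInt (g := PV α (deriv u))
      ⟨by linarith [hα.1], by linarith [hα.2]⟩
      hx.1 (hu.intervalIntegrable_comp_deriv hm (· - c))
      ((hu.continuousAt_deriv hm hx).sub continuousAt_const)]
    rfl
  have hae : ∀ᵐ x, x ∈ uIoc (0 : ℝ) 1 →
      deriv u x * rightRLDeriv (α - 1) (fun y => -rightFracInt (α - 1) (PV α (deriv u)) y) x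
        = -(deriv u x ^ 2 - c * deriv u x) := by
    filter_upwards [(countable_range fun k : ℕ => (k : ℝ) / m).ae_notMem volume] with x hxm hx
    rw [uIoc_of_le zero_le_one] at hx
    have hx1 : x ≠ 1 := fun h => hxm ⟨m, by simp [h, (Nat.cast_pos.2 hm).ne']⟩
    rw [hRL x ⟨⟨hx.1, lt_of_le_of_ne hx.2 hx1⟩, hxm⟩]
    ring
  rw [intervalIntegral.integral_congr_ae hae, intervalIntegral.integral_neg, neg_neg,
    intervalIntegral.integral_sub (hu.intervalIntegrable_comp_deriv hm (· ^ 2))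
      ((hu.intervalIntegrable_comp_deriv hm fun d => d).const_mul c),
    intervalIntegral.integral_const_mul, hu.integral_deriv hm hcont, hu0, hu1]
  ring
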